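/- arXiv:1710.10838 — 4 statements merged into one kernel-verified Lean document; each statement's English description precedes it below -/
import Mathlib

section
/- Let H be a finite group that is a minimal counterexample structure as follows: H has a unique minimal normal subgroup M which is elementary abelian of order 2^k, M is contained in the Frattini subgroup of H, H/M ≅ A_k, and H has a faithful irreducible complex representation W of dimension less than 2k in which the restriction to M contains a nontrivial linear character. If every H-orbit on the nontrivial linear characters of M has size 1, k, or at least k(k-1)/2, then dim W = k. -/
/-!
By Clifford theory, `V` is the direct sum of the simultaneous `M`-eigenspaces of the characters in
the `H`-orbit of `χ`, all of the same dimension `e`, so `dim V = s * e` where `s` is the orbit size.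
As `M` is abelian it fixes `χ`, so `s` divides `|A_k|`. If `s = 1`, then `M` acts by scalars and
faithfulness forces `|M| ≤ 2`; if `s = k`, then `e = 1` because `dim V < 2k`; if `s ≥ k(k-1)/2`,
then `dim V < 2k` leaves only `k ≤ 4`. For `k = 4`, the preimage `Q` of the Klein four group is a
normal `2`-subgroup, so it centralizes some element `≠ 1` of `M`; the centralizer of `Q` in `M` is
then a nontrivial normal subgroup, hence all of `M`, and `s` divides `[H : Q] = 3 < 6`.
-/

/-- The conjugation action of `h : H` on linear characters of a normal subgroup `M`:
`(h • χ)(m) = χ(h⁻¹ m h)`. -/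
def conjChar {H : Type*} [Group H] (M : Subgroup H) [hM : M.Normal] (h : H)
    (χ : M →* ℂˣ) : M →* ℂˣ :=
  χ.comp (MulAut.conjNormal h⁻¹ : MulAut M).toMonoidHom

open Module MulAction

section CharSpace

variable {K G V : Type*} [Field K] [Group G] [AddCommGroup V] [Module K V]

def charSpace (ρ : Representation K G V) (χ : G →* Kˣ) : Submodule K V :=
  ⨅ g, Module.End.eigenspace (ρ g) (χ g)

theorem mem_charSpace {ρ : Representation K G V} {χ : G →* Kˣ} {v : V} :
    v ∈ charSpace ρ χ ↔ ∀ g, ρ g v = (χ g : K) • v := by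
  simp [charSpace]

theorem iSupIndep_charSpace [IsMulCommutative G] (ρ : Representation K G V) :
    iSupIndep (charSpace ρ) := by
  have hindep := Module.End.independent_iInf_maxGenEigenspace_of_forall_mapsTo (fun g ↦ ρ g)
    fun g g' μ ↦ Module.End.mapsTo_maxGenEigenspace_of_comm
      (by rw [Commute, SemiconjBy, ← map_mul, ← map_mul, mul_comm']) μ
  have hinj : Function.Injective fun (χ : G →* Kˣ) (g : G) ↦ (χ g : K) :=
    fun χ χ' h ↦ MonoidHom.ext fun g ↦ Units.ext (congrFun h g)
  exact (hindep.comp hinj).mono fun χ ↦ iInf_mono fun g ↦ Module.End.eigenspace_le_maxGenEigenspace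

theorem injective_of_charSpace_eq_top {ρ : Representation K G V} (hρ : Function.Injective ρ)
    {χ : G →* Kˣ} (hχ : charSpace ρ χ = ⊤) : Function.Injective χ := by
  refine (injective_iff_map_eq_one χ).2 fun g hg ↦ hρ ?_
  ext v
  have hv : v ∈ charSpace ρ χ := hχ ▸ Submodule.mem_top
  simp [mem_charSpace.1 hv g, hg]

end CharSpace

theorem isMulCommutative_of_mul_self_eq_one {G : Type*} [Group G] (hG : ∀ g : G, g * g = 1) :
    IsMulCommutative G :=
  ⟨⟨Commute.of_orderOf_dvd_two fun g ↦ orderOf_dvd_of_pow_eq_one (by rw [sq, hG])⟩⟩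

theorem card_le_two_of_injective {K G : Type*} [Field K] [Group G] (hG : ∀ g : G, g * g = 1)
    {χ : G →* Kˣ} (hχ : Function.Injective χ) : Nat.card G ≤ 2 := by
  let χ₂ : G →* rootsOfUnity 2 K :=
    χ.codRestrict _ fun g ↦ by simp [mem_rootsOfUnity, sq, ← map_mul, hG]
  have hχ₂ : Function.Injective χ₂ := fun a b h ↦ hχ (congrArg Subtype.val h)
  exact (Nat.card_le_card_of_injective χ₂ hχ₂).trans (card_rootsOfUnity K 2)

section ConjChar

variable {H : Type*} [Group H] {M : Subgroup H} [M.Normal]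

theorem conjChar_apply (h : H) (χ : M →* ℂˣ) (m : M) :
    conjChar M h χ m = χ ⟨h⁻¹ * m * h, by simpa using ‹M.Normal›.conj_mem m m.2 h⁻¹⟩ := by
  show χ _ = χ _
  congr 1
  ext
  simp

instance : MulAction H (M →* ℂˣ) where
  smul := conjChar M
  one_smul χ := by ext m; simp [HSMul.hSMul, conjChar_apply]
  mul_smul a b χ := by ext m; simp [HSMul.hSMul, conjChar_apply, mul_assoc]

theorem smul_eq_conjChar (h : H) (χ : M →* ℂˣ) : h • χ = conjChar M h χ := rfl

theorem centralizer_le_stabilizer (χ : M →* ℂˣ) :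
    Subgroup.centralizer (M : Set H) ≤ stabilizer H χ := by
  intro h hh
  have hconj (m : M) : h⁻¹ * m * h = m := by rw [mul_assoc, hh m m.2, inv_mul_cancel_left]
  ext m
  simp [smul_eq_conjChar, conjChar_apply, hconj]

theorem card_orbit_dvd_index {N : Subgroup H} (hN : N ≤ Subgroup.centralizer (M : Set H))
    (χ : M →* ℂˣ) : Nat.card (orbit H χ) ∣ N.index := by
  rw [Nat.card_coe_set_eq, ← index_stabilizer]
  exact Subgroup.index_dvd_of_le (hN.trans (centralizer_le_stabilizer χ))

variable {V : Type*} [AddCommGroup V] [Module ℂ V] (ρ : Representation ℂ H V)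

theorem apply_mem_charSpace_smul (h : H) {χ : M →* ℂˣ} {v : V}
    (hv : v ∈ charSpace (ρ.comp M.subtype) χ) :
    ρ h v ∈ charSpace (ρ.comp M.subtype) (h • χ) := by
  rw [mem_charSpace] at hv ⊢
  intro m
  have hm : h⁻¹ * m * h ∈ M := by simpa using ‹M.Normal›.conj_mem m m.2 h⁻¹
  calc ρ m (ρ h v) = ρ h (ρ (h⁻¹ * m * h) v) := by
        simp [← Module.End.mul_apply, ← map_mul, mul_assoc]
    _ = ((h • χ) m : ℂ) • ρ h v := by
      simpa [smul_eq_conjChar, conjChar_apply] using congrArg (ρ h) (hv ⟨_, hm⟩)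

end ConjChar

section Clifford

variable {H V : Type*} [Group H] {M : Subgroup H} [M.Normal] [AddCommGroup V] [Module ℂ V]
  (ρ : Representation ℂ H V)

theorem finrank_charSpace_le_smul [FiniteDimensional ℂ V] (h : H) (χ : M →* ℂˣ) :
    finrank ℂ (charSpace (ρ.comp M.subtype) χ) ≤
      finrank ℂ (charSpace (ρ.comp M.subtype) (h • χ)) := by
  rw [← LinearEquiv.finrank_map_eq (LinearEquiv.ofBijective (ρ h) (ρ.apply_bijective h))]
  exact Submodule.finrank_mono
    (Submodule.map_le_iff_le_comap.2 fun v hv ↦ apply_mem_charSpace_smul ρ h hv)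

theorem finrank_charSpace_smul [FiniteDimensional ℂ V] (h : H) (χ : M →* ℂˣ) :
    finrank ℂ (charSpace (ρ.comp M.subtype) (h • χ)) =
      finrank ℂ (charSpace (ρ.comp M.subtype) χ) := by
  have hle := finrank_charSpace_le_smul ρ h⁻¹ (h • χ)
  rw [inv_smul_smul] at hle
  exact le_antisymm hle (finrank_charSpace_le_smul ρ h χ)

theorem iSup_charSpace_orbit_eq_top
    (hirr : ∀ U : Submodule ℂ V, (∀ g, ∀ v ∈ U, ρ g v ∈ U) → U = ⊥ ∨ U = ⊤)
    {χ : M →* ℂˣ} (hχ : charSpace (ρ.comp M.subtype) χ ≠ ⊥) :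
    ⨆ ψ : orbit H χ, charSpace (ρ.comp M.subtype) ψ = ⊤ := by
  set E : orbit H χ → Submodule ℂ V := fun ψ ↦ charSpace (ρ.comp M.subtype) ψ
  have hinv (g : H) : iSup E ≤ (iSup E).comap (ρ g) := iSup_le fun ψ _ hv ↦
    le_iSup E ⟨g • ψ, smul_orbit_subset g χ (Set.smul_mem_smul_set ψ.2)⟩
      (apply_mem_charSpace_smul ρ g hv)
  exact (hirr _ fun g _ hv ↦ hinv g hv).resolve_left
    fun hbot ↦ hχ (eq_bot_iff.2 (hbot ▸ le_iSup E ⟨χ, mem_orbit_self χ⟩))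

theorem finrank_eq_card_orbit_mul_finrank_charSpace [Finite H] [IsMulCommutative M]
    [FiniteDimensional ℂ V]
    (hirr : ∀ U : Submodule ℂ V, (∀ g, ∀ v ∈ U, ρ g v ∈ U) → U = ⊥ ∨ U = ⊤)
    {χ : M →* ℂˣ} (hχ : charSpace (ρ.comp M.subtype) χ ≠ ⊥) :
    finrank ℂ V = Nat.card (orbit H χ) * finrank ℂ (charSpace (ρ.comp M.subtype) χ) := by
  classical
  have hint : DirectSum.IsInternal fun ψ : orbit H χ ↦ charSpace (ρ.comp M.subtype) ψ :=
    (DirectSum.isInternal_submodule_iff_iSupIndep_and_iSup_eq_top _).2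
      ⟨(iSupIndep_charSpace _).comp Subtype.val_injective, iSup_charSpace_orbit_eq_top ρ hirr hχ⟩
  have : Fintype (orbit H χ) := Fintype.ofFinite _
  rw [← LinearEquiv.finrank_eq (LinearEquiv.ofBijective (DirectSum.coeLinearMap _) hint),
    Module.finrank_directSum, Nat.card_eq_fintype_card, ← smul_eq_mul, ← Finset.card_univ,
    ← Finset.sum_const]
  refine Finset.sum_congr rfl fun ⟨ψ, h, hψ⟩ _ ↦ ?_
  subst hψ
  exact finrank_charSpace_smul ρ h χ

end Clifford

section PGroup

variable {G : Type*} [Group G] {p : ℕ} [Fact p.Prime] {M Q : Subgroup G} [M.Normal]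

theorem inf_centralizer_ne_bot_of_isPGroup [Finite M] (hM : p ∣ Nat.card M)
    (hQ : IsPGroup p Q) : M ⊓ Subgroup.centralizer (Q : Set G) ≠ ⊥ := by
  let : MulAction Q M := MulAction.compHom M ((MulAut.conjNormal (H := M)).comp Q.subtype)
  obtain ⟨m, hm, hne⟩ := hQ.exists_fixed_point_of_prime_dvd_card_of_fixed_point M hM
    (a := 1) fun q ↦ map_one (MulAut.conjNormal (q : G))
  have hcomm (q : Q) : q * (m : G) = m * q := by
    have hqm : ((MulAut.conjNormal (q : G) m : M) : G) = m := congrArg Subtype.val (hm q)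
    rwa [MulAut.conjNormal_apply, mul_inv_eq_iff_eq_mul] at hqm
  refine (Subgroup.ne_bot_iff_exists_ne_one).2 ⟨⟨m, m.2, fun q hq ↦ hcomm ⟨q, hq⟩⟩, ?_⟩
  exact fun h ↦ hne (Subtype.ext (congrArg Subtype.val h).symm)

theorem le_centralizer_of_isPGroup [Finite M] [Q.Normal]
    (huniq : ∀ N : Subgroup G, N.Normal → N ≠ ⊥ → M ≤ N) (hM : p ∣ Nat.card M)
    (hQ : IsPGroup p Q) : Q ≤ Subgroup.centralizer (M : Set G) := by
  rw [Subgroup.le_centralizer_iff]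
  exact (huniq _ inferInstance (inf_centralizer_ne_bot_of_isPGroup hM hQ)).trans inf_le_right

end PGroup

section KleinFour

variable {H : Type*} [Group H] {M : Subgroup H} [M.Normal]

theorem card_orbit_dvd_three (huniq : ∀ N : Subgroup H, N.Normal → N ≠ ⊥ → M ≤ N)
    (hcard : Nat.card M = 2 ^ 4) (iso : H ⧸ M ≃* alternatingGroup (Fin 4)) (χ : M →* ℂˣ) :
    Nat.card (orbit H χ) ∣ 3 := by
  let π : H →* alternatingGroup (Fin 4) := iso.toMonoidHom.comp (QuotientGroup.mk' M)
  have hπ : Function.Surjective π := iso.surjective.comp (QuotientGroup.mk'_surjective M)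
  have hker : π.ker = M := by ext; simp [π]
  have h4 : Nat.card (Fin 4) = 4 := Nat.card_fin 4
  have hV₄ : Nat.card (alternatingGroup.kleinFour (Fin 4)) = 2 ^ 2 :=
    alternatingGroup.kleinFour_card_of_card_eq_four h4
  let Q := (alternatingGroup.kleinFour (Fin 4)).comap π
  have : Q.Normal := (alternatingGroup.normal_kleinFour h4).comap π
  have hQ : IsPGroup 2 Q :=
    (IsPGroup.of_card hV₄).comap_of_ker_isPGroup π (hker ▸ IsPGroup.of_card hcard)
  have hindex : Q.index = 3 := by
    have := (alternatingGroup.kleinFour (Fin 4)).card_mul_index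
    rw [hV₄, nat_card_alternatingGroup, h4] at this
    norm_num [Nat.factorial] at this
    rw [Subgroup.index_comap_of_surjective _ hπ]
    omega
  have : Finite M := Nat.finite_of_card_ne_zero (by simp [hcard])
  exact hindex ▸ card_orbit_dvd_index (le_centralizer_of_isPGroup huniq (by simp [hcard]) hQ) χ

end KleinFour

theorem mul_eq_of_orbit_size_cases {k s e : ℕ} (he : 0 < e) (hlt : s * e < 2 * k)
    (hs₁ : s = 1 → 2 ^ k ≤ 2) (hdvd : s ∣ Nat.card (alternatingGroup (Fin k)))
    (hs₄ : k = 4 → s ∣ 3) (hs : s = 1 ∨ s = k ∨ k * (k - 1) / 2 ≤ s) : s * e = k := by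
  have hse : s ≤ s * e := Nat.le_mul_of_pos_right s he
  rcases hs with rfl | rfl | hs
  · have : k ≤ 1 := by
      by_contra! hk
      exact absurd (hs₁ rfl) (by simpa using Nat.pow_lt_pow_right one_lt_two hk)
    omega
  · have : e < 2 := Nat.lt_of_mul_lt_mul_left (by linarith : s * e < s * 2)
    interval_cases e
    exact mul_one s
  · have hk : k ≤ 4 := by
      by_contra! hk
      have : k * 4 ≤ k * (k - 1) := Nat.mul_le_mul_left k (by omega)
      omega
    interval_cases k
    · omega
    · rw [Nat.card_unique, Nat.dvd_one] at hdvd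
      omega
    · rw [nat_card_alternatingGroup, Nat.card_fin, Nat.factorial_two, Nat.dvd_one] at hdvd
      exact absurd (hs₁ hdvd) (by norm_num)
    · rw [nat_card_alternatingGroup, Nat.card_fin] at hdvd
      have : s ≤ 3 := Nat.le_of_dvd three_pos hdvd
      obtain rfl : s = 3 := by omega
      omega
    · have : s ≤ 3 := Nat.le_of_dvd three_pos (hs₄ rfl)
      omega

theorem dim_eq_of_faithful_irreducible_general
    (k : ℕ)
    (H : Type*) [Group H] [Finite H]
    (M : Subgroup H) [hM : M.Normal]
    -- `M` is the unique minimal normal subgroup of `H`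
    (huniq : ∀ N : Subgroup H, N.Normal → N ≠ ⊥ → M ≤ N)
    -- `M` is elementary abelian of order `2^k`
    (hcard : Nat.card M = 2 ^ k) (helem : ∀ x ∈ M, x * x = 1)
    (iso : H ⧸ M ≃* alternatingGroup (Fin k))
    -- a faithful irreducible complex representation `W = (V, ρ)` of dimension `< 2k`
    (V : Type*) [AddCommGroup V] [Module ℂ V] [FiniteDimensional ℂ V]
    (ρ : Representation ℂ H V)
    (hfaithful : Function.Injective ρ)
    (hirr : Nontrivial V ∧
      ∀ U : Submodule ℂ V, (∀ g, ∀ v ∈ U, ρ g v ∈ U) → U = ⊥ ∨ U = ⊤)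
    (hdim : Module.finrank ℂ V < 2 * k)
    -- the restriction of `W` to `M` contains a nontrivial linear character
    (hlin : ∃ (χ : M →* ℂˣ) (v : V), χ ≠ 1 ∧ v ≠ 0 ∧
      ∀ m : M, ρ (m : H) v = (χ m : ℂ) • v)
    -- every `H`-orbit on nontrivial linear characters of `M` has size `1`, `k`,
    -- or at least `k(k-1)/2`
    (horb : ∀ χ : M →* ℂˣ, χ ≠ 1 →
      Nat.card {χ' : M →* ℂˣ | ∃ h : H, χ' = conjChar M h χ} = 1 ∨
      Nat.card {χ' : M →* ℂˣ | ∃ h : H, χ' = conjChar M h χ} = k ∨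
      k * (k - 1) / 2 ≤ Nat.card {χ' : M →* ℂˣ | ∃ h : H, χ' = conjChar M h χ}) :
    Module.finrank ℂ V = k := by
  obtain ⟨χ, v, hχ, hv, hvχ⟩ := hlin
  have hMsq (x : M) : x * x = 1 := Subtype.ext (helem x x.2)
  have : IsMulCommutative M := isMulCommutative_of_mul_self_eq_one hMsq
  have hχV : charSpace (ρ.comp M.subtype) χ ≠ ⊥ :=
    fun h ↦ hv ((Submodule.eq_bot_iff _).1 h v (mem_charSpace.2 hvχ))
  have hV := finrank_eq_card_orbit_mul_finrank_charSpace ρ hirr.2 hχV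
  have horbit : {χ' : M →* ℂˣ | ∃ h : H, χ' = conjChar M h χ} = orbit H χ := by
    ext; simp [mem_orbit_iff, smul_eq_conjChar, eq_comm]
  have hs₁ (hs : Nat.card (orbit H χ) = 1) : 2 ^ k ≤ 2 := by
    rw [hs, one_mul] at hV
    have htop := Submodule.eq_top_of_finrank_eq hV.symm
    exact hcard ▸ card_le_two_of_injective hMsq
      (injective_of_charSpace_eq_top (fun _ _ h ↦ Subtype.ext (hfaithful h)) htop)
  have hdvd : Nat.card (orbit H χ) ∣ Nat.card (alternatingGroup (Fin k)) := by
    rw [← Nat.card_congr iso.toEquiv, ← Subgroup.index_eq_card]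
    exact card_orbit_dvd_index (Subgroup.le_centralizer M) χ
  have hs₄ (hk : k = 4) : Nat.card (orbit H χ) ∣ 3 :=
    card_orbit_dvd_three huniq (hk ▸ hcard) (hk ▸ iso) χ
  rw [hV] at hdim ⊢
  exact mul_eq_of_orbit_size_cases (Nat.pos_of_ne_zero (mt Submodule.finrank_eq_zero.1 hχV))
    hdim hs₁ hdvd hs₄ (horbit ▸ horb χ hχ)

/-- **(Guralnick–Liebeck, proof of Theorem 2.1, final step.)**
Let `H` be a finite group with a unique minimal normal subgroup `M`, where `M` is
elementary abelian of order `2^k`, `M ≤ Φ(H)`, and `H/M ≅ A_k`. Suppose `H` has a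
faithful irreducible complex representation `W` of dimension `< 2k` whose restriction to
`M` contains a nontrivial linear character. If every `H`-orbit on the nontrivial linear
characters of `M` has size `1`, `k`, or at least `k(k-1)/2`, then `dim W = k`. -/
theorem dim_eq_of_faithful_irreducible
    (k : ℕ)
    (H : Type*) [Group H] [Finite H]
    (M : Subgroup H) [hM : M.Normal] (hMne : M ≠ ⊥)
    -- `M` is the unique minimal normal subgroup of `H`
    (huniq : ∀ N : Subgroup H, N.Normal → N ≠ ⊥ → M ≤ N)
    -- `M` is elementary abelian of order `2^k`
    (hcard : Nat.card M = 2 ^ k) (helem : ∀ x ∈ M, x * x = 1)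
    -- `M` is contained in the Frattini subgroup
    (hfrat : M ≤ frattini H)
    (iso : H ⧸ M ≃* alternatingGroup (Fin k))
    -- a faithful irreducible complex representation `W = (V, ρ)` of dimension `< 2k`
    (V : Type*) [AddCommGroup V] [Module ℂ V] [FiniteDimensional ℂ V]
    (ρ : Representation ℂ H V)
    (hfaithful : Function.Injective ρ)
    (hirr : Nontrivial V ∧
      ∀ U : Submodule ℂ V, (∀ g, ∀ v ∈ U, ρ g v ∈ U) → U = ⊥ ∨ U = ⊤)
    (hdim : Module.finrank ℂ V < 2 * k)
    -- the restriction of `W` to `M` contains a nontrivial linear character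
    (hlin : ∃ (χ : M →* ℂˣ) (v : V), χ ≠ 1 ∧ v ≠ 0 ∧
      ∀ m : M, ρ (m : H) v = (χ m : ℂ) • v)
    -- every `H`-orbit on nontrivial linear characters of `M` has size `1`, `k`,
    -- or at least `k(k-1)/2`
    (horb : ∀ χ : M →* ℂˣ, χ ≠ 1 →
      Nat.card {χ' : M →* ℂˣ | ∃ h : H, χ' = conjChar M h χ} = 1 ∨
      Nat.card {χ' : M →* ℂˣ | ∃ h : H, χ' = conjChar M h χ} = k ∨
      k * (k - 1) / 2 ≤ Nat.card {χ' : M →* ℂˣ | ∃ h : H, χ' = conjChar M h χ}) :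
    Module.finrank ℂ V = k :=
  dim_eq_of_faithful_irreducible_general k H M (hM := hM) huniq hcard helem iso V ρ hfaithful hirr
    hdim hlin horb
end

section
/- With notation as before (p an odd prime dividing k, k ≥ 10, G = A_k, Y the stabilizer of {1,2}, θ the nontrivial 1-dimensional 𝔽_p Y-module), let M be the unique submodule of θ↑_Y^G with composition factors D^(k-2,1,1) and D^(k-1,1). Then H²(G, M) ≠ 0. -/
/-!
Concrete model: the induced module `θ↑_Y^G` (for `Y ≅ S_{k-2}` the stabilizer in
`G = A_k` of `{1,2}` and `θ` its sign character) is the module of antisymmetric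
functions on ordered pairs of distinct points; its unique submodule `M` with
composition factors `D^(k-2,1,1)` and `D^(k-1,1)` is the Specht module
`S^(k-2,1,1)`: the antisymmetric functions whose row sums vanish.
-/

open Equiv

/-- Permutation representation of `G` on `X → F` from an action of `G` on `X`. -/
def permRep (F G X : Type*) [CommRing F] [Group G] [MulAction G X] :
    Representation F G (X → F) where
  toFun g := LinearMap.funLeft F F (fun x => g⁻¹ • x)
  map_one' := by ext v x; simp
  map_mul' g h := by ext v x; simp [LinearMap.funLeft, mul_smul]

variable {F G V : Type*} [CommRing F] [Group G] [AddCommGroup V] [Module F V]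

/-- A submodule invariant under a representation. -/
def InvSub (ρ : Representation F G V) (U : Submodule F V) : Prop :=
  ∀ g, ∀ v ∈ U, ρ g v ∈ U

/-- An irreducible (simple) invariant submodule. -/
def IsIrreducibleSub (ρ : Representation F G V) (U : Submodule F V) : Prop :=
  InvSub ρ U ∧ U ≠ ⊥ ∧ ∀ W ≤ U, InvSub ρ W → W = ⊥ ∨ W = U

/-- The socle of the invariant submodule `S`: the sum of all irreducible invariant
submodules contained in `S`. -/
def socIn (ρ : Representation F G V) (S : Submodule F V) : Submodule F V :=
  sSup {U | U ≤ S ∧ IsIrreducibleSub ρ U}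

/-- The radical of the invariant submodule `S`: the intersection of all maximal proper
invariant submodules of `S` (so `S/radIn ρ S` is the head of `S`). -/
def radIn (ρ : Representation F G V) (S : Submodule F V) : Submodule F V :=
  sInf {U | U ≤ S ∧ InvSub ρ U ∧ U ≠ S ∧
    ∀ W, U ≤ W → W ≤ S → InvSub ρ W → W = U ∨ W = S}

/-- `S` is an indecomposable invariant submodule. -/
def IsIndecomposableSub (ρ : Representation F G V) (S : Submodule F V) : Prop :=
  ¬ ∃ U W : Submodule F V, InvSub ρ U ∧ InvSub ρ W ∧ U ≠ ⊥ ∧ W ≠ ⊥ ∧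
      U ⊓ W = ⊥ ∧ U ⊔ W = S

/-- The subrepresentation on an invariant submodule. -/
def subRep (ρ : Representation F G V) (U : Submodule F V)
    (hU : InvSub ρ U) : Representation F G U where
  toFun g := (ρ g).restrict (hU g)
  map_one' := by ext v; simp [LinearMap.restrict_apply]
  map_mul' g h := by ext v; simp [LinearMap.restrict_apply]

/-- The quotient representation on `V ⧸ U` for an invariant submodule `U`. -/
def quotRep (ρ : Representation F G V) (U : Submodule F V)
    (hU : InvSub ρ U) : Representation F G (V ⧸ U) where
  toFun g := U.mapQ U (ρ g) (fun v hv => hU g v hv)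
  map_one' := by
    refine Submodule.linearMap_qext _ ?_
    ext v; simp
  map_mul' g h := by
    refine Submodule.linearMap_qext _ ?_
    ext v; simp [Submodule.mapQ_apply]

/-- Ordered pairs of distinct elements of `Fin k`, i.e. `(k-2,1,1)`-tabloids. -/
def OP (k : ℕ) := {q : Fin k × Fin k // q.1 ≠ q.2}

instance (k : ℕ) : Fintype (OP k) := Subtype.fintype _
instance (k : ℕ) : DecidableEq (OP k) := Subtype.instDecidableEq

instance (k : ℕ) : MulAction (Equiv.Perm (Fin k)) (OP k) where
  smul g q := ⟨(g q.1.1, g q.1.2), fun hgq => q.2 (g.injective hgq)⟩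
  one_smul q := by cases q; rfl
  mul_smul g h q := by cases q; rfl

/-- Transposing an ordered pair. -/
def swapOP {k : ℕ} (q : OP k) : OP k := ⟨(q.1.2, q.1.1), fun h => q.2 h.symm⟩

/-- Antisymmetric functions on ordered pairs. -/
noncomputable def antisymSub (k : ℕ) (F : Type*) [CommRing F] : Submodule F (OP k → F) :=
  ⨅ q : OP k, LinearMap.ker
    ((LinearMap.proj q : (OP k → F) →ₗ[F] F) + LinearMap.proj (swapOP q))

/-- Functions on ordered pairs whose row sums vanish. -/
noncomputable def rowZeroSub (k : ℕ) (F : Type*) [CommRing F] : Submodule F (OP k → F) :=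
  ⨅ i : Fin k, LinearMap.ker
    (∑ q ∈ Finset.univ.filter (fun q : OP k => q.1.1 = i),
      (LinearMap.proj q : (OP k → F) →ₗ[F] F))

/-- The Specht module `S^(k-2,1,1)` inside the tabloid permutation module. -/
noncomputable def spechtHook (k : ℕ) (F : Type*) [CommRing F] : Submodule F (OP k → F) :=
  antisymSub k F ⊓ rowZeroSub k F

lemma antisym_inv (k : ℕ) (F : Type*) [CommRing F] :
    InvSub (permRep F (Equiv.Perm (Fin k)) (OP k)) (antisymSub k F) := by
  intro g v hv
  simp only [antisymSub, Submodule.mem_iInf, LinearMap.mem_ker, LinearMap.add_apply,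
    LinearMap.proj_apply] at hv ⊢
  intro q
  exact hv (g⁻¹ • q)

lemma rowZero_inv (k : ℕ) (F : Type*) [CommRing F] :
    InvSub (permRep F (Equiv.Perm (Fin k)) (OP k)) (rowZeroSub k F) := by
  intro g v hv
  simp only [rowZeroSub, Submodule.mem_iInf, LinearMap.mem_ker, LinearMap.sum_apply,
    LinearMap.proj_apply] at hv ⊢
  intro i
  rw [← hv (g⁻¹ i)]
  refine Finset.sum_nbij' (fun q => g⁻¹ • q) (fun q => g • q) ?_ ?_ ?_ ?_ ?_
  · intro q hq
    simp only [Finset.mem_filter, Finset.mem_univ, true_and] at hq ⊢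
    show g⁻¹ q.1.1 = g⁻¹ i
    rw [hq]
  · intro q hq
    simp only [Finset.mem_filter, Finset.mem_univ, true_and] at hq ⊢
    show g q.1.1 = i
    rw [hq]; simp
  · intro q _; exact smul_inv_smul g q
  · intro q _; exact inv_smul_smul g q
  · intro q _; rfl

lemma spechtHook_inv (k : ℕ) (F : Type*) [CommRing F] :
    InvSub (permRep F (Equiv.Perm (Fin k)) (OP k)) (spechtHook k F) :=
  fun g v hv => ⟨antisym_inv k F g v hv.1, rowZero_inv k F g v hv.2⟩


lemma spechtHook_inv_alt (k : ℕ) (F : Type*) [CommRing F] :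
    InvSub (permRep F (alternatingGroup (Fin k)) (OP k)) (spechtHook k F) :=
  fun g v hv => spechtHook_inv k F g v hv

/-- The submodule `M` of `θ↑_Y^G` with composition factors `D^(k-2,1,1)` and
`D^(k-1,1)`, as a representation of `A_k`. -/
noncomputable def Mrep (k p : ℕ) [Fact p.Prime] :
    Representation (ZMod p) (alternatingGroup (Fin k)) (spechtHook k (ZMod p)) :=
  subRep _ _ (spechtHook_inv_alt k (ZMod p))
/-!
The class is the connecting image of `g ↦ g • e₀ - e₀` under the row-sum sequence
`0 → M → {antisymmetric functions on ordered pairs} → {functions on Fin k with sum 0} → 0`.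
Instead of Shapiro's lemma, nonvanishing is detected on the cyclic group generated by the
translation `σ : i ↦ i + k/p`, an even permutation of order `p` acting freely on points and on
ordered pairs. A 1-cocycle lifting `g ↦ g • e₀ - e₀` through the row sums would give an
antisymmetric `x` with vanishing `σ`-norm and row sums `σ • e₀ - e₀`. Freeness makes `2 • x` the
`σ`-coboundary of an antisymmetric `W`; then `2 • e₀ - rowSum W` is `σ`-invariant, so its total
sum `2` is a multiple of `p`, which is impossible for odd `p`.
-/

open Finset Equiv
open scoped Fin.NatCast

theorem Function.Periodic.sum_range_mul {M : Type*} [AddCommMonoid M] {u : ℕ → M} {m : ℕ}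
    (hu : Function.Periodic u m) (n : ℕ) :
    ∑ i ∈ range (n * m), u i = n • ∑ i ∈ range m, u i := by
  induction n with
  | zero => simp
  | succ n ih =>
    rw [Nat.succ_mul, sum_range_add, ih, succ_nsmul]
    congr 1
    refine sum_congr rfl fun i _ => ?_
    rw [add_comm]
    exact_mod_cast hu.nat_mul n i

/-- `D q` is the number of steps from `q` back to the fundamental domain `{D = 0}` of the
action of `τ`, and the primitive sums `x` along that path. -/
theorem exists_smul_sub_eq_of_sum_range_eq_zero {M X A : Type*} [Monoid M] [MulAction M X]
    [AddCommGroup A] (τ : M) (D : X → ℕ) {n : ℕ} (hn : 0 < n)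
    (hD : ∀ q, D (τ • q) = if D q = 0 then n - 1 else D q - 1) {x : X → A}
    (hx : ∀ q, ∑ s ∈ range n, x (τ ^ s • q) = 0) :
    ∃ w : X → A, ∀ q, w (τ • q) - w q = x q := by
  refine ⟨fun q => -∑ s ∈ range (D q), x (τ ^ s • q), fun q => ?_⟩
  have hshift : ∀ d, ∑ s ∈ range d, x (τ ^ s • τ • q) = ∑ s ∈ range d, x (τ ^ (s + 1) • q) :=
    fun d => sum_congr rfl fun s _ => by rw [smul_smul, ← pow_succ]
  simp only [hD q, hshift]
  split_ifs with hq
  · have hxq := hx q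
    rw [← Nat.sub_add_cancel hn, sum_range_succ', pow_zero, one_smul] at hxq
    rw [hq, range_zero, sum_empty, neg_zero, sub_zero]
    exact (eq_neg_of_add_eq_zero_right hxq).symm
  · obtain ⟨d, hd⟩ := Nat.exists_eq_succ_of_ne_zero hq
    rw [hd, Nat.succ_sub_one, sum_range_succ']
    simp

theorem Representation.sum_range_pow_apply_eq_zero (ρ : Representation F G V) {a : G → V}
    (ha : ∀ g h, a (g * h) = a g + ρ g (a h)) {g : G} {n : ℕ} (hg : g ^ n = 1) :
    ∑ s ∈ range n, ρ (g ^ s) (a g) = 0 := by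
  have ha1 : a 1 = 0 := by simpa using ha 1 1
  have hpow : ∀ t, a (g ^ t) = ∑ s ∈ range t, ρ (g ^ s) (a g) := by
    intro t
    induction t with
    | zero => simpa using ha1
    | succ t ih => rw [pow_succ, ha, ih, sum_range_succ]
  rw [← hpow, hg, ha1]

section PermRep

variable {X : Type*} [MulAction G X]

@[simp]
theorem permRep_apply (g : G) (v : X → F) (x : X) : permRep F G X g v x = v (g⁻¹ • x) := rfl

theorem permRep_subgroup_apply {H : Subgroup G} (h : H) : permRep F H X h = permRep F G X h :=
  rfl

theorem permRep_single [DecidableEq X] (g : G) (x : X) (c : F) :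
    permRep F G X g (Pi.single x c) = Pi.single (g • x) c := by
  ext y
  simp [Pi.single_apply, inv_smul_eq_iff]

end PermRep

theorem finCycle_eq_finRotate_pow {n : ℕ} (c : Fin n) : finCycle c = finRotate n ^ c.val :=
  DFunLike.coe_injective (by rw [finCycle_eq_finRotate_iterate, Perm.coe_pow])

theorem sign_finCycle {n : ℕ} (c : Fin n) :
    Perm.sign (finCycle c) = (-1) ^ ((n - 1) * c.val) := by
  rw [finCycle_eq_finRotate_pow, map_pow, sign_finRotate, pow_mul]

theorem finCycle_pow {n : ℕ} [NeZero n] (c : Fin n) (j : ℕ) : finCycle c ^ j = finCycle (j • c) := by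
  induction j with
  | zero => ext i; simp
  | succ j ih => ext i; simp [pow_succ, ih, succ_nsmul, add_assoc, add_comm c]

@[simp]
theorem OP.val_smul {k : ℕ} (g : Perm (Fin k)) (q : OP k) : (g • q).1 = (g q.1.1, g q.1.2) :=
  rfl

theorem swapOP_smul {k : ℕ} (g : Perm (Fin k)) (q : OP k) : swapOP (g • q) = g • swapOP q := rfl

def OP.mk {k : ℕ} (a b : Fin k) (h : a ≠ b) : OP k := ⟨(a, b), h⟩

namespace SpechtHook

variable {k p : ℕ}

section Shift

variable [NeZero k]

variable (k p) in
def shift : Perm (Fin k) := finCycle ((k / p : ℕ) : Fin k)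

theorem val_natCast_div (hp : 1 < p) : (((k / p : ℕ) : Fin k) : ℕ) = k / p :=
  Nat.mod_eq_of_lt (Nat.div_lt_self (Nat.pos_of_neZero k) hp)

theorem shift_pow_self (hdvd : p ∣ k) : shift k p ^ p = 1 := by
  rw [shift, finCycle_pow, ← nsmul_one, ← mul_nsmul', nsmul_one, Nat.mul_div_cancel' hdvd,
    Fin.natCast_self]
  ext i
  simp

theorem shift_mem_alternatingGroup (hp : 1 < p) (hodd : Odd p) (hdvd : p ∣ k) :
    shift k p ∈ alternatingGroup (Fin k) := by
  rw [Perm.mem_alternatingGroup, shift, sign_finCycle, val_natCast_div hp]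
  refine Even.neg_one_pow ?_
  rcases Nat.even_or_odd (k / p) with h | h
  · exact h.mul_left _
  · have hk : Odd k := Nat.mul_div_cancel' hdvd ▸ hodd.mul h
    exact (Nat.Odd.sub_odd hk odd_one).mul_right _

theorem shift_inv_apply (i : Fin k) : (shift k p)⁻¹ i = i - ((k / p : ℕ) : Fin k) := by
  simp [shift, Perm.inv_def]

theorem val_shift_inv_apply_div (hp : 1 < p) (hdvd : p ∣ k) (i : Fin k) :
    ((shift k p)⁻¹ i).val / (k / p) =
      if i.val / (k / p) = 0 then p - 1 else i.val / (k / p) - 1 := by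
  set m := k / p
  have hm : 0 < m := Nat.div_pos (Nat.le_of_dvd (Nat.pos_of_neZero k) hdvd) (by omega)
  have hk : k = p * m := (Nat.mul_div_cancel' hdvd).symm
  rw [shift_inv_apply]
  split_ifs with hi
  · have hlt : i < ((m : ℕ) : Fin k) := by
      rw [Fin.lt_def, val_natCast_div hp]
      exact (Nat.div_eq_zero_iff_lt hm).mp hi
    rw [Fin.coe_sub_iff_lt.mpr hlt, val_natCast_div hp]
    have hmk : m ≤ k := hk ▸ Nat.le_mul_of_pos_left m (by omega)
    rw [show k + i - m = i + (p - 1) * m by rw [Nat.sub_one_mul]; omega,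
      Nat.add_mul_div_right _ _ hm, hi, zero_add]
  · have hle : ((m : ℕ) : Fin k) ≤ i := by
      rw [Fin.le_def, val_natCast_div hp]
      exact (Nat.one_le_div_iff hm).mp (Nat.one_le_iff_ne_zero.mpr hi)
    rw [Fin.coe_sub_iff_le.mpr hle, val_natCast_div hp]
    simpa using Nat.sub_mul_div i.val m 1

theorem sum_eq_nsmul_of_shift_invariant {M : Type*} [AddCommMonoid M] (hdvd : p ∣ k)
    {u : Fin k → M} (hu : ∀ i, u (shift k p i) = u i) :
    ∑ i, u i = p • ∑ j ∈ range (k / p), u j := by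
  have hper : Function.Periodic (fun n : ℕ => u n) (k / p) := fun n => by
    simpa [shift] using hu n
  rw [← hper.sum_range_mul, Nat.mul_div_cancel' hdvd, ← Fin.sum_univ_eq_sum_range]
  simp only [Fin.cast_val_eq_self]

end Shift

def rowSum : (OP k → F) →ₗ[F] (Fin k → F) :=
  LinearMap.pi fun i => ∑ q ∈ univ.filter (fun q : OP k => q.1.1 = i), LinearMap.proj q

theorem rowSum_apply (v : OP k → F) (i : Fin k) :
    rowSum v i = ∑ q ∈ univ.filter (fun q : OP k => q.1.1 = i), v q := by
  simp [rowSum]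

theorem rowZeroSub_eq_ker : rowZeroSub k F = LinearMap.ker rowSum :=
  (LinearMap.ker_pi _).symm

theorem rowSum_eq_zero_of_mem_spechtHook {v : OP k → F} (hv : v ∈ spechtHook k F) :
    rowSum v = 0 := by
  have hrow := (Submodule.mem_inf.mp hv).2
  rwa [rowZeroSub_eq_ker, LinearMap.mem_ker] at hrow

theorem sum_rowSum (v : OP k → F) : ∑ i, rowSum v i = ∑ q, v q := by
  simp only [rowSum_apply]
  exact sum_fiberwise univ (fun q : OP k => q.1.1) v

theorem rowSum_permRep (g : Perm (Fin k)) (v : OP k → F) :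
    rowSum (permRep F _ (OP k) g v) = permRep F _ (Fin k) g (rowSum v) := by
  ext i
  simp only [rowSum_apply, permRep_apply, sum_filter]
  rw [← Equiv.sum_comp (MulAction.toPerm g)]
  simp [← Equiv.eq_symm_apply]

theorem rowSum_single (q : OP k) (c : F) : rowSum (Pi.single q c) = Pi.single q.1.1 c := by
  ext i
  simp [rowSum_apply, Pi.single_apply, eq_comm]

theorem mem_antisymSub_iff {v : OP k → F} :
    v ∈ antisymSub k F ↔ ∀ q, v (swapOP q) = -v q := by
  simp [antisymSub, Submodule.mem_iInf, add_eq_zero_iff_eq_neg']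

theorem single_swapOP (r q : OP k) (c : F) :
    (Pi.single r c : OP k → F) (swapOP q) = (Pi.single (swapOP r) c : OP k → F) q := by
  simp only [Pi.single_apply]
  congr 1
  exact propext ⟨fun h => h ▸ rfl, fun h => h ▸ rfl⟩

def edge (a b : Fin k) : OP k → F :=
  if h : a = b then 0
  else Pi.single (OP.mk a b h) 1 - Pi.single (OP.mk b a (Ne.symm h)) 1

theorem edge_mem_antisymSub (a b : Fin k) : (edge a b : OP k → F) ∈ antisymSub k F := by
  rw [mem_antisymSub_iff]
  intro q
  unfold edge
  split_ifs with h
  · simp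
  · rw [Pi.sub_apply, Pi.sub_apply, single_swapOP, single_swapOP, neg_sub]
    rfl

theorem rowSum_edge (a b : Fin k) :
    rowSum (edge a b : OP k → F) = Pi.single a 1 - Pi.single b 1 := by
  unfold edge
  split_ifs with h
  · simp [h]
  · rw [map_sub, rowSum_single, rowSum_single]
    rfl

theorem coe_Mrep_apply [Fact p.Prime] (g : alternatingGroup (Fin k))
    (v : spechtHook k (ZMod p)) :
    (Mrep k p g v : OP k → ZMod p) = permRep (ZMod p) (Perm (Fin k)) (OP k) g v := rfl

section Obstruction

variable [NeZero k]

/-- The image of `1` under the connecting map `H⁰(G, F) → H¹(G, {z : Fin k → F | ∑ z = 0})`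
of the sequence `0 → {∑ z = 0} → (Fin k → F) → F → 0`. -/
def baseCocycle (g : Perm (Fin k)) : Fin k → F :=
  permRep F _ (Fin k) g (Pi.single 0 1) - Pi.single 0 1

theorem rowSum_edge_apply_zero (g : Perm (Fin k)) :
    rowSum (edge (g 0) 0 : OP k → F) = baseCocycle g := by
  rw [rowSum_edge, baseCocycle, permRep_single]
  rfl

/-- The coboundary of the lift `g ↦ edge (g 0) 0` of `baseCocycle` through the row sums. -/
def obstruction (g h : Perm (Fin k)) : OP k → F :=
  edge (g 0) 0 + permRep F _ (OP k) g (edge (h 0) 0) - edge ((g * h) 0) 0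

theorem obstruction_mem_spechtHook (g h : Perm (Fin k)) :
    obstruction g h ∈ spechtHook k F := by
  refine Submodule.mem_inf.mpr ⟨sub_mem (add_mem (edge_mem_antisymSub _ _)
    (antisym_inv k F g _ (edge_mem_antisymSub _ _))) (edge_mem_antisymSub _ _), ?_⟩
  rw [rowZeroSub_eq_ker, LinearMap.mem_ker, obstruction, map_sub, map_add, rowSum_permRep,
    rowSum_edge_apply_zero, rowSum_edge_apply_zero, rowSum_edge_apply_zero, baseCocycle,
    baseCocycle, baseCocycle, map_sub, map_mul, Module.End.mul_apply]
  abel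

theorem exists_sum_eq_zero_and_permRep_shift_sub_eq (hp : 1 < p) (hdvd : p ∣ k)
    {x : OP k → F} (hx : x ∈ antisymSub k F)
    (hnorm : ∑ s ∈ range p, permRep F _ (OP k) (shift k p ^ s) x = 0) :
    ∃ W : OP k → F, ∑ q, W q = 0 ∧ permRep F _ (OP k) (shift k p) W - W = 2 • x := by
  obtain ⟨w, hw⟩ := exists_smul_sub_eq_of_sum_range_eq_zero (shift k p)⁻¹
    (fun q : OP k => q.1.1.val / (k / p)) (by omega)
    (fun q => val_shift_inv_apply_div hp hdvd q.1.1)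
    (fun q => by simpa only [Finset.sum_apply, permRep_apply, inv_pow, Pi.zero_apply]
      using congrFun hnorm q)
  refine ⟨fun q => w q - w (swapOP q), ?_, funext fun q => ?_⟩
  · rw [sum_sub_distrib, sub_eq_zero]
    exact (Equiv.sum_comp ⟨swapOP, swapOP, fun _ => rfl, fun _ => rfl⟩ w).symm
  · have hswap := hw (swapOP q)
    rw [mem_antisymSub_iff.mp hx, ← swapOP_smul] at hswap
    simp only [Pi.sub_apply, permRep_apply, Pi.smul_apply]
    rw [two_smul]
    linear_combination hw q - hswap

theorem permRep_shift_sub_ne_two_smul_baseCocycle [Fact p.Prime] (hodd : Odd p)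
    (hdvd : p ∣ k) {z : Fin k → ZMod p} (hz : ∑ i, z i = 0) :
    permRep (ZMod p) _ (Fin k) (shift k p) z - z ≠ 2 • baseCocycle (shift k p) := by
  intro h
  set u : Fin k → ZMod p := 2 • Pi.single 0 1 - z
  have hfix : permRep (ZMod p) _ (Fin k) (shift k p) u = u := by
    rw [← sub_eq_zero]
    calc permRep (ZMod p) _ (Fin k) (shift k p) u - u
        = 2 • baseCocycle (shift k p) - (permRep (ZMod p) _ (Fin k) (shift k p) z - z) := by
          simp only [u, map_sub, map_nsmul, baseCocycle]
          abel
      _ = 0 := by rw [h, sub_self]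
  have hu : ∀ i, u (shift k p i) = u i := fun i => by
    simpa using (congrFun hfix (shift k p i)).symm
  have hsum : ∑ i, u i = 2 := by
    simp [u, sum_sub_distrib, hz, ← mul_sum]
  have h2 : (2 : ZMod p) ≠ 0 := Ring.two_ne_zero (by
    rw [ZMod.ringChar_zmod_n]
    rintro rfl
    exact Nat.not_odd_iff_even.mpr even_two hodd)
  apply h2
  rw [← hsum, sum_eq_nsmul_of_shift_invariant hdvd hu, nsmul_eq_mul, ZMod.natCast_self,
    zero_mul]

theorem rowSum_ne_baseCocycle_shift [Fact p.Prime] (hodd : Odd p) (hdvd : p ∣ k)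
    {x : OP k → ZMod p} (hx : x ∈ antisymSub k (ZMod p))
    (hnorm : ∑ s ∈ range p, permRep (ZMod p) _ (OP k) (shift k p ^ s) x = 0) :
    rowSum x ≠ baseCocycle (shift k p) := by
  intro hrow
  obtain ⟨W, hW, hWx⟩ :=
    exists_sum_eq_zero_and_permRep_shift_sub_eq (Fact.out : p.Prime).one_lt hdvd hx hnorm
  refine permRep_shift_sub_ne_two_smul_baseCocycle hodd hdvd (z := rowSum W) ?_ ?_
  · rw [sum_rowSum, hW]
  · rw [← rowSum_permRep, ← map_sub, hWx, map_nsmul, hrow]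

variable (k p) in
def obstructionCocycle [Fact p.Prime] : groupCohomology.cocycles₂ (Rep.of (Mrep k p)) :=
  ⟨fun gh => ⟨obstruction gh.1 gh.2, obstruction_mem_spechtHook _ _⟩, by
    rw [groupCohomology.mem_cocycles₂_def]
    intro g h j
    ext1
    simp only [Submodule.coe_sub, Submodule.coe_add, coe_Mrep_apply, obstruction, map_sub,
      map_add, Subgroup.coe_mul, ← Module.End.mul_apply, ← map_mul, mul_assoc,
      ZeroMemClass.coe_zero]
    abel⟩

theorem obstructionCocycle_apply [Fact p.Prime] (g h : alternatingGroup (Fin k)) :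
    (obstructionCocycle k p (g, h) : OP k → ZMod p) = obstruction g h := rfl

theorem obstructionCocycle_not_mem_coboundaries₂ [Fact p.Prime] (hodd : Odd p)
    (hdvd : p ∣ k) :
    ⇑(obstructionCocycle k p) ∉ groupCohomology.coboundaries₂ (Rep.of (Mrep k p)) := by
  rintro ⟨b, hb⟩
  let a : alternatingGroup (Fin k) → OP k → ZMod p := fun g =>
    edge ((g : Perm (Fin k)) 0) 0 - ((b g : spechtHook k (ZMod p)) : OP k → ZMod p)
  have ha : ∀ g h, a (g * h) = a g + permRep (ZMod p) _ (OP k) g (a h) := by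
    intro g h
    have hbgh := congrArg Subtype.val (congrFun hb (g, h))
    simp only [groupCohomology.d₁₂_hom_apply, obstructionCocycle_apply, Submodule.coe_add,
      Submodule.coe_sub, coe_Mrep_apply, obstruction] at hbgh
    simp only [a, map_sub, permRep_subgroup_apply]
    linear_combination hbgh
  let σ : alternatingGroup (Fin k) :=
    ⟨shift k p, shift_mem_alternatingGroup (Fact.out : p.Prime).one_lt hodd hdvd⟩
  have hσ : σ ^ p = 1 := Subtype.ext (by simpa using shift_pow_self hdvd)
  refine rowSum_ne_baseCocycle_shift hodd hdvd (x := a σ) ?_ ?_ ?_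
  · exact sub_mem (edge_mem_antisymSub _ _) (b σ).2.1
  · exact (permRep (ZMod p) _ (OP k)).sum_range_pow_apply_eq_zero ha hσ
  · rw [map_sub, rowSum_edge_apply_zero, rowSum_eq_zero_of_mem_spechtHook (b σ).2, sub_zero]

end Obstruction

end SpechtHook

theorem H2_of_M_nontrivial_general (k p : ℕ) (hk : 10 ≤ k) [Fact p.Prime]
    (hodd : Odd p) (hdvd : p ∣ k) :
    Nontrivial (groupCohomology (Rep.of (Mrep k p)) 2) := by
  have : NeZero k := ⟨by omega⟩
  refine nontrivial_of_ne (groupCohomology.H2π _ (SpechtHook.obstructionCocycle k p)) 0 ?_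
  rw [Ne, groupCohomology.H2π_eq_zero_iff]
  exact SpechtHook.obstructionCocycle_not_mem_coboundaries₂ hodd hdvd

/-- **(Guralnick–Liebeck, Lemma 3.2(ii)(a).)** Let `p` be an odd prime dividing `k`,
`k ≥ 10`, `G = A_k`, `Y` the stabilizer of `{1,2}`, and `θ` the nontrivial 1-dimensional
`𝔽_p Y`-module. Let `M` be the (unique) submodule of the induced module `θ↑_Y^G` with
composition factors `D^(k-2,1,1)` and `D^(k-1,1)` (concretely: the antisymmetric
functions on ordered pairs whose row sums vanish). Then `H²(G, M) ≠ 0`. -/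
theorem H2_of_M_nontrivial (k p : ℕ) (hk : 10 ≤ k) (hp : p.Prime) [Fact p.Prime]
    (hodd : Odd p) (hdvd : p ∣ k) :
    Nontrivial (groupCohomology (Rep.of (Mrep k p)) 2) :=
  H2_of_M_nontrivial_general k p hk hodd hdvd
end

section
/- With the same notation, the restriction of M to Y decomposes as M|_Y ≅ θ ⊕ M₀ for some 𝔽_p Y-module M₀; in particular M has a Y-invariant hyperplane M₀ with M/M₀ ≅ θ as Y-modules. -/
/-!
Concrete model: the induced module `θ↑_Y^G` (for `Y ≅ S_{k-2}` the stabilizer in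
`G = A_k` of `{1,2}` and `θ` its sign character) is the module of antisymmetric
functions on ordered pairs of distinct points; its unique submodule `M` with
composition factors `D^(k-2,1,1)` and `D^(k-1,1)` is the Specht module
`S^(k-2,1,1)`: the antisymmetric functions whose row sums vanish.
-/

open Equiv

variable {F G V : Type*} [CommRing F] [Group G] [AddCommGroup V] [Module F V]

open Pointwise

/-- The set of 2-element subsets of `{1,…,k}`. -/
def Xk (k : ℕ) := {s : Finset (Fin k) // s.card = 2}

instance (k : ℕ) : Fintype (Xk k) := Subtype.fintype _
instance (k : ℕ) : DecidableEq (Xk k) := Subtype.instDecidableEq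

instance (k : ℕ) : MulAction (Equiv.Perm (Fin k)) (Xk k) where
  smul g s := ⟨g • s.1, by rw [Finset.card_smul_finset]; exact s.2⟩
  one_smul s := Subtype.ext (one_smul _ s.1)
  mul_smul g h s := Subtype.ext (mul_smul g h s.1)

/-- The 2-subset `{1,2}` (i.e. `{0,1}` in `Fin k`). -/
def pair01 (k : ℕ) (hk : 2 ≤ k) : Xk k :=
  ⟨{⟨0, by omega⟩, ⟨1, by omega⟩}, Finset.card_pair (by simp [Fin.ext_iff])⟩

/-- The value at `y` of the sign character `θ` of `Y ≅ S_{k-2}` (the stabilizer of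
`{1,2}`): for `y ∈ Y ≤ A_k`, `θ(y) = 1` if `y` fixes the points `1,2` and `θ(y) = -1`
if `y` interchanges them. -/
def thetaChar (k : ℕ) (hk : 2 ≤ k) (F : Type*) [CommRing F] (y : Equiv.Perm (Fin k)) : F :=
  if y ⟨0, by omega⟩ = ⟨0, by omega⟩ then 1 else -1

/-!
The `θ`-line is spanned by `w (i, j) = c i - c j` with `c = e₁ - e₂`: `w` is antisymmetric, its
row sums are `k • c i = 0` because `p ∣ k`, and an element of `Y`, which fixes or swaps `1` and
`2`, multiplies `c` and hence `w` by `θ`. As `w (1, 2) = 2 ≠ 0` for odd `p`, the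
hyperplane `M₀ = {v ∈ M | v (1, 2) = 0}` is a complement of `⟨w⟩`; it is `Y`-invariant since
`Y` maps the pair `(1, 2)` to itself or to `(2, 1)`, where an antisymmetric `v` takes the
value `-v (1, 2)`.
-/

theorem permRep_subgroup {F G X : Type*} [CommRing F] [Group G] [MulAction G X]
    (H : Subgroup G) (h : H) : permRep F H X h = permRep F G X h :=
  rfl

theorem Submodule.inf_ker_sup_span_singleton {K V : Type*} [Field K] [AddCommGroup V]
    [Module K V] {S : Submodule K V} (f : V →ₗ[K] K) {x : V} (hx : x ∈ S) (hfx : f x ≠ 0) :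
    S ⊓ LinearMap.ker f ⊔ K ∙ x = S := by
  rw [inf_sup_assoc_of_le _ ((span_singleton_le_iff_mem x S).2 hx), sup_comm,
    LinearMap.span_singleton_sup_ker_eq_top f hfx, inf_top_eq]

theorem Submodule.inf_ker_inf_span_singleton {K V : Type*} [Field K] [AddCommGroup V]
    [Module K V] (S : Submodule K V) (f : V →ₗ[K] K) {x : V} (hfx : f x ≠ 0) :
    S ⊓ LinearMap.ker f ⊓ K ∙ x = ⊥ := by
  have hx : x ≠ 0 := fun h => hfx (by rw [h, map_zero])
  have : Disjoint (LinearMap.ker f) (K ∙ x) := (disjoint_span_singleton' hx).2 hfx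
  exact (this.mono_left inf_le_right).eq_bot

section Pairs

variable {k : ℕ} {F : Type*} [CommRing F]

theorem apply_swapOP {v : OP k → F} (hv : v ∈ antisymSub k F) (q : OP k) :
    v (swapOP q) = -v q := by
  simp only [antisymSub, Submodule.mem_iInf, LinearMap.mem_ker, LinearMap.add_apply,
    LinearMap.proj_apply] at hv
  exact eq_neg_of_add_eq_zero_right (hv q)

variable (k F) in
def pairDiff : (Fin k → F) →ₗ[F] (OP k → F) where
  toFun c q := c q.1.1 - c q.1.2
  map_add' c d := by ext q; simp only [Pi.add_apply]; ring
  map_smul' a c := by ext q; simp only [Pi.smul_apply, smul_eq_mul, RingHom.id_apply]; ring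

@[simp]
theorem pairDiff_apply (c : Fin k → F) (q : OP k) : pairDiff k F c q = c q.1.1 - c q.1.2 :=
  rfl

theorem pairDiff_mem_antisymSub (c : Fin k → F) : pairDiff k F c ∈ antisymSub k F := by
  simp only [antisymSub, Submodule.mem_iInf, LinearMap.mem_ker, LinearMap.add_apply,
    LinearMap.proj_apply]
  intro q
  show c q.1.1 - c q.1.2 + (c q.1.2 - c q.1.1) = 0
  ring

theorem sum_row_pairDiff (c : Fin k → F) (i : Fin k) :
    ∑ q ∈ Finset.univ.filter (fun q : OP k => q.1.1 = i), pairDiff k F c q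
      = k * c i - ∑ j, c j := by
  have hrow : ∑ q ∈ Finset.univ.filter (fun q : OP k => q.1.1 = i), pairDiff k F c q
      = ∑ j ∈ Finset.univ.erase i, (c i - c j) := by
    refine Finset.sum_bij (fun q _ => q.1.2) ?_ ?_ ?_ ?_
    · intro q hq
      simp only [Finset.mem_filter, Finset.mem_univ, true_and] at hq
      exact Finset.mem_erase.2 ⟨fun h => q.2 (hq.trans h.symm), Finset.mem_univ _⟩
    · intro q₁ h₁ q₂ h₂ h
      simp only [Finset.mem_filter, Finset.mem_univ, true_and] at h₁ h₂
      exact Subtype.ext (Prod.ext (h₁.trans h₂.symm) h)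
    · intro j hj
      exact ⟨⟨(i, j), fun h => (Finset.mem_erase.1 hj).1 h.symm⟩,
        Finset.mem_filter.2 ⟨Finset.mem_univ _, rfl⟩, rfl⟩
    · intro q hq
      simp only [Finset.mem_filter, Finset.mem_univ, true_and] at hq
      simp [hq]
  rw [hrow, Finset.sum_sub_distrib, Finset.sum_const, Finset.card_erase_of_mem
    (Finset.mem_univ i), Finset.card_univ, Fintype.card_fin, nsmul_eq_mul,
    Nat.cast_pred i.pos, Finset.sum_erase_eq_sub (Finset.mem_univ i)]
  ring

theorem pairDiff_mem_rowZeroSub {c : Fin k → F} (hk : (k : F) = 0) (hc : ∑ j, c j = 0) :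
    pairDiff k F c ∈ rowZeroSub k F := by
  simp only [rowZeroSub, Submodule.mem_iInf, LinearMap.mem_ker, LinearMap.sum_apply,
    LinearMap.proj_apply]
  intro i
  rw [sum_row_pairDiff, hk, hc, zero_mul, sub_zero]

theorem permRep_pairDiff (σ : Perm (Fin k)) (c : Fin k → F) :
    permRep F (Perm (Fin k)) (OP k) σ (pairDiff k F c) = pairDiff k F (c ∘ ⇑σ⁻¹) :=
  rfl

end Pairs

section StabilizerOfPair

variable (k : ℕ) (hk : 2 ≤ k) (F : Type*) [CommRing F]

def pt0 : Fin k := ⟨0, by omega⟩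

def pt1 : Fin k := ⟨1, by omega⟩

theorem pt0_ne_pt1 : pt0 k hk ≠ pt1 k hk := by
  simp [pt0, pt1, Fin.ext_iff]

def op01 : OP k := ⟨(pt0 k hk, pt1 k hk), pt0_ne_pt1 k hk⟩

def thetaCol : Fin k → F := Pi.single (pt0 k hk) 1 - Pi.single (pt1 k hk) 1

theorem sum_thetaCol : ∑ j, thetaCol k hk F j = 0 := by
  simp [thetaCol, Finset.sum_sub_distrib]

theorem pairDiff_thetaCol_op01 : pairDiff k F (thetaCol k hk F) (op01 k hk) = 2 := by
  have hne := pt0_ne_pt1 k hk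
  show thetaCol k hk F (pt0 k hk) - thetaCol k hk F (pt1 k hk) = 2
  simp [thetaCol, hne, hne.symm]
  norm_num

variable {k hk}

theorem fix_or_swap_of_smul_pair01 {σ : Perm (Fin k)} (h : σ • pair01 k hk = pair01 k hk) :
    (σ (pt0 k hk) = pt0 k hk ∧ σ (pt1 k hk) = pt1 k hk) ∨
      (σ (pt0 k hk) = pt1 k hk ∧ σ (pt1 k hk) = pt0 k hk) := by
  have h' : ({σ (pt0 k hk), σ (pt1 k hk)} : Set (Fin k)) = {pt0 k hk, pt1 k hk} := by
    have h₁ : σ • (pair01 k hk).1 = (pair01 k hk).1 := congrArg Subtype.val h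
    have := congrArg (fun s : Finset (Fin k) => (s : Set (Fin k))) h₁
    simpa [pair01, pt0, pt1, Finset.coe_smul_finset, Set.smul_set_insert] using this
  exact Set.pair_eq_pair_iff.1 h'

theorem apply_smul_op01_eq_zero {σ : Perm (Fin k)} (h : σ • pair01 k hk = pair01 k hk)
    {v : OP k → F} (hv : v ∈ antisymSub k F) (hv0 : v (op01 k hk) = 0) :
    v (σ • op01 k hk) = 0 := by
  rcases fix_or_swap_of_smul_pair01 h with ⟨e0, e1⟩ | ⟨e0, e1⟩
  · have : σ • op01 k hk = op01 k hk := Subtype.ext (Prod.ext e0 e1)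
    rw [this, hv0]
  · have : σ • op01 k hk = swapOP (op01 k hk) := Subtype.ext (Prod.ext e0 e1)
    rw [this, apply_swapOP hv, hv0, neg_zero]

theorem thetaCol_comp_inv {σ : Perm (Fin k)} (h : σ • pair01 k hk = pair01 k hk) :
    thetaCol k hk F ∘ ⇑σ⁻¹ = thetaChar k hk F σ • thetaCol k hk F := by
  have hcomp : thetaCol k hk F ∘ ⇑σ⁻¹
      = Pi.single (σ (pt0 k hk)) 1 - Pi.single (σ (pt1 k hk)) 1 := by
    rw [thetaCol, Pi.sub_comp, Perm.inv_def, Pi.single_comp_equiv, Pi.single_comp_equiv]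
    rfl
  rcases fix_or_swap_of_smul_pair01 h with ⟨e0, e1⟩ | ⟨e0, e1⟩
  · have hθ : thetaChar k hk F σ = 1 := if_pos e0
    rw [hcomp, e0, e1, hθ, one_smul, thetaCol]
  · have hθ : thetaChar k hk F σ = -1 := if_neg (e0.trans_ne (pt0_ne_pt1 k hk).symm)
    rw [hcomp, e0, e1, hθ, neg_one_smul, thetaCol, neg_sub]

end StabilizerOfPair

/-- **(Guralnick–Liebeck, Lemma 3.2(ii)(b).)** Let `p` be an odd prime dividing `k`,
`k ≥ 10`, `G = A_k`, `Y` the stabilizer in `G` of `{1,2}`, `θ` the nontrivial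
1-dimensional `𝔽_p Y`-module, and `M` the submodule of `θ↑_Y^G` with composition factors
`D^(k-2,1,1)` and `D^(k-1,1)` (concretely: antisymmetric functions on ordered pairs with
vanishing row sums). Then the restriction `M|_Y` decomposes as `θ ⊕ M₀`: there are
`Y`-invariant submodules `M₀` and `W` of `M` with `M = M₀ ⊕ W`, where `W` is a line on
which `Y` acts by `θ`; in particular `M₀` is a `Y`-invariant hyperplane of `M` with
`M/M₀ ≅ θ` as `Y`-modules. -/
theorem M_restricted_to_Y_decomposes (k p : ℕ) (hk : 10 ≤ k)
    [Fact p.Prime] (hodd : Odd p) (hdvd : p ∣ k) :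
    ∃ M₀ W : Submodule (ZMod p) (OP k → ZMod p),
      M₀ ≤ spechtHook k (ZMod p) ∧ W ≤ spechtHook k (ZMod p) ∧
      M₀ ⊔ W = spechtHook k (ZMod p) ∧ M₀ ⊓ W = ⊥ ∧
      Module.finrank (ZMod p) W = 1 ∧
      (∀ y : MulAction.stabilizer (alternatingGroup (Fin k)) (pair01 k (by omega)),
        ∀ v ∈ M₀,
          permRep (ZMod p) (alternatingGroup (Fin k)) (OP k)
            (y : alternatingGroup (Fin k)) v ∈ M₀) ∧
      (∀ y : MulAction.stabilizer (alternatingGroup (Fin k)) (pair01 k (by omega)),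
        ∀ v ∈ W,
          permRep (ZMod p) (alternatingGroup (Fin k)) (OP k)
            (y : alternatingGroup (Fin k)) v
            = thetaChar k (by omega) (ZMod p)
                ((y : alternatingGroup (Fin k)) : Equiv.Perm (Fin k)) • v) := by
  have hk2 : 2 ≤ k := by omega
  have hkF : (k : ZMod p) = 0 := (ZMod.natCast_eq_zero_iff k p).2 hdvd
  have h2 : (2 : ZMod p) ≠ 0 := Ring.two_ne_zero <| by
    rw [ZMod.ringChar_zmod_n]
    rintro rfl
    exact Nat.not_odd_iff_even.2 even_two hodd
  set w := pairDiff k (ZMod p) (thetaCol k hk2 (ZMod p)) with hw_def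
  have hw : w ∈ spechtHook k (ZMod p) :=
    ⟨pairDiff_mem_antisymSub _, pairDiff_mem_rowZeroSub hkF (sum_thetaCol k hk2 _)⟩
  have hw01 : LinearMap.proj (R := ZMod p) (op01 k hk2) w ≠ 0 := by
    rwa [LinearMap.proj_apply, hw_def, pairDiff_thetaCol_op01]
  refine ⟨spechtHook k (ZMod p) ⊓ LinearMap.ker (LinearMap.proj (op01 k hk2)), ZMod p ∙ w,
    inf_le_left, (Submodule.span_singleton_le_iff_mem _ _).2 hw,
    Submodule.inf_ker_sup_span_singleton _ hw hw01,
    Submodule.inf_ker_inf_span_singleton _ _ hw01,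
    finrank_span_singleton fun h => hw01 (by rw [h, map_zero]), ?_, ?_⟩
  · rintro ⟨y, hy⟩ v ⟨hvM, hv0⟩
    exact ⟨spechtHook_inv_alt k _ y v hvM,
      apply_smul_op01_eq_zero _ (inv_smul_eq_iff.2 hy.symm) hvM.1 hv0⟩
  · rintro ⟨y, hy⟩ v hv
    obtain ⟨t, rfl⟩ := Submodule.mem_span_singleton.1 hv
    rw [map_smul, permRep_subgroup, permRep_pairDiff, thetaCol_comp_inv _ hy, map_smul,
      smul_comm]
end

section
/- For every k ≥ 7, there exists a nonsplit extension 1 → M → H → A_k → 1 with M a nontrivial elementary abelian 2-group such that H has a faithful transitive permutation representation of degree at most 2k(k-1). -/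
/-!
Let a group `G` act on a linearly ordered set `α`, and on the signed ordered pairs
`Y = (Fin 2 ↪ α) × ℤˣ` consider `θ (ω, ε) = (reverse ω, orientation ω * ε)`. Since
`orientation (reverse ω) = -orientation ω`, `θ²` flips the sign, so `θ` has order 4 and its orbits
are the unordered pairs. Inside the wreath product `ℤˣ ≀ G` acting on `Y`, the elements commuting
with `θ` are exactly those satisfying the condition defining `orientationCover G α`. They map onto
`G`, and the kernel consists of the sign changes constant on unordered pairs: an elementary abelian
2-group. If an involution `g` reverses an ordered pair `ω`, every lift of `g` acts on the `θ`-orbit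
of `ω` as `θ` or `θ⁻¹`, so it squares to `θ² ≠ 1`; a complement would contain an involutive lift,
so the extension does not split. For `G = A_k` with `k ≥ 4` take `g = (0 1)(2 3)`; since `A_k` is
2-transitive, the cover is transitive on the `2k(k-1)` points of `Y`.
-/

open Equiv MulAction

section Extensions

variable {G G' Q : Type*} [Group G] [Group G'] [Group Q]

theorem Subgroup.IsComplement'.map_mulEquiv {H K : Subgroup G} (h : H.IsComplement' K)
    (e : G ≃* G') : (H.map (e : G →* G')).IsComplement' (K.map (e : G →* G')) := by
  refine Subgroup.isComplement'_of_disjoint_and_mul_eq_univ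
    (Subgroup.disjoint_map e.injective h.disjoint) ?_
  rw [Subgroup.coe_map, Subgroup.coe_map, ← Set.image_mul,
    (Subgroup.isComplement'_def.mp h).mul_eq]
  exact Set.image_univ_of_surjective e.surjective

theorem MonoidHom.not_exists_isComplement'_ker {π : G →* Q} (x : G) {n : ℕ}
    (hx : π x ^ n = 1) (hlift : ∀ y, π y = π x → y ^ n ≠ 1) :
    ¬ ∃ K : Subgroup G, π.ker.IsComplement' K := by
  rintro ⟨K, hK⟩
  obtain ⟨⟨⟨m, hm⟩, ⟨c, hc⟩⟩, hmc, -⟩ := (Subgroup.isComplement'_def.mp hK).existsUnique x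
  have hπc : π c = π x := by
    rw [← hmc, map_mul, π.mem_ker.mp hm, one_mul]
  have hcn : c ^ n ∈ π.ker := by rw [π.mem_ker, map_pow, hπc, hx]
  exact hlift c hπc (Subgroup.disjoint_def.mp hK.disjoint hcn (pow_mem hc n))

structure MonoidHom.IsNonsplitElementaryAbelianTwoExtension (π : G →* Q) : Prop where
  surjective : Function.Surjective π
  ker_ne_bot : π.ker ≠ ⊥
  sq_eq_one_of_mem_ker : ∀ x ∈ π.ker, x ^ 2 = 1
  mul_comm_of_mem_ker : ∀ x ∈ π.ker, ∀ y ∈ π.ker, x * y = y * x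
  not_exists_isComplement' : ¬ ∃ K : Subgroup G, π.ker.IsComplement' K

theorem MonoidHom.IsNonsplitElementaryAbelianTwoExtension.comp_mulEquiv {π : G →* Q}
    (hπ : π.IsNonsplitElementaryAbelianTwoExtension) (e : G' ≃* G) :
    (π.comp (e : G' →* G)).IsNonsplitElementaryAbelianTwoExtension := by
  have hker : (π.comp (e : G' →* G)).ker = π.ker.map (e.symm : G →* G') := by
    rw [← Subgroup.comap_equiv_eq_map_symm]; rfl
  refine ⟨hπ.surjective.comp e.surjective, ?_, fun x hx => ?_, fun x hx y hy => ?_, ?_⟩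
  · rw [hker, Ne, Subgroup.map_eq_bot_iff_of_injective _ e.symm.injective]
    exact hπ.ker_ne_bot
  · exact e.injective (by rw [map_pow, hπ.sq_eq_one_of_mem_ker (e x) hx, map_one])
  · exact e.injective (by rw [map_mul, map_mul, hπ.mul_comm_of_mem_ker (e x) hx (e y) hy])
  · rintro ⟨K, hK⟩
    refine hπ.not_exists_isComplement' ⟨K.map (e : G' →* G), ?_⟩
    simpa [hker, Subgroup.map_map] using hK.map_mulEquiv e

theorem MonoidHom.IsNonsplitElementaryAbelianTwoExtension.exists_transitive_subgroup_perm_fin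
    {Y : Type*} [Fintype Y] [MulAction G Y] [FaithfulSMul G Y] [IsPretransitive G Y]
    {π : G →* Q} (hπ : π.IsNonsplitElementaryAbelianTwoExtension) :
    ∃ H : Subgroup (Perm (Fin (Fintype.card Y))),
      (∀ a b : Fin (Fintype.card Y), ∃ h ∈ H, h a = b) ∧
      ∃ M : Subgroup H, M ≠ ⊥ ∧
        (∀ x ∈ M, x ^ 2 = 1) ∧ (∀ x ∈ M, ∀ y ∈ M, x * y = y * x) ∧
        ∃ _ : M.Normal, Nonempty ((H ⧸ M) ≃* Q) ∧ ¬ ∃ K : Subgroup H, M.IsComplement' K := by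
  let e := Fintype.equivFin Y
  let ρ : G →* Perm (Fin (Fintype.card Y)) :=
    (e.permCongrHom : Perm Y →* _).comp (MulAction.toPermHom G Y)
  have hρ : Function.Injective ρ := e.permCongrHom.injective.comp toPerm_injective
  refine ⟨ρ.range, fun a b => ?_, ?_⟩
  · obtain ⟨g, hg⟩ := exists_smul_eq G (e.symm a) (e.symm b)
    exact ⟨ρ g, ⟨g, rfl⟩, by simp [ρ, hg]⟩
  have h := hπ.comp_mulEquiv (MonoidHom.ofInjective hρ).symm
  exact ⟨_, h.ker_ne_bot, h.sq_eq_one_of_mem_ker, h.mul_comm_of_mem_ker, inferInstance,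
    ⟨QuotientGroup.quotientKerEquivOfSurjective _ h.surjective⟩, h.not_exists_isComplement'⟩

end Extensions

namespace OrientationCover

variable {G α : Type*} [Group G] [MulAction G α]

def reverse (ω : Fin 2 ↪ α) : Fin 2 ↪ α := (Equiv.swap (0 : Fin 2) 1).toEmbedding.trans ω

@[simp] lemma reverse_apply_zero (ω : Fin 2 ↪ α) : reverse ω 0 = ω 1 := rfl
@[simp] lemma reverse_apply_one (ω : Fin 2 ↪ α) : reverse ω 1 = ω 0 := rfl

@[simp] lemma reverse_reverse (ω : Fin 2 ↪ α) : reverse (reverse ω) = ω := by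
  ext i; fin_cases i <;> rfl

lemma reverse_smul (g : G) (ω : Fin 2 ↪ α) : reverse (g • ω) = g • reverse ω := rfl

variable (G α) in
abbrev PairWreath := ((Fin 2 ↪ α) → ℤˣ) ⋊[mulAutArrow] G

@[simp] lemma mulAutArrow_apply_apply' (g : G) (f : (Fin 2 ↪ α) → ℤˣ) (ω : Fin 2 ↪ α) :
    (mulAutArrow g : MulAut ((Fin 2 ↪ α) → ℤˣ)) f ω = f (g⁻¹ • ω) := rfl

instance : SMul (PairWreath G α) ((Fin 2 ↪ α) × ℤˣ) where
  smul w y := (w.right • y.1, w.left (w.right • y.1) * y.2)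

lemma smul_def (w : PairWreath G α) (y : (Fin 2 ↪ α) × ℤˣ) :
    w • y = (w.right • y.1, w.left (w.right • y.1) * y.2) := rfl

instance : MulAction (PairWreath G α) ((Fin 2 ↪ α) × ℤˣ) where
  one_smul y := by simp [smul_def]
  mul_smul w v y := by
    simp only [smul_def, SemidirectProduct.mul_left, SemidirectProduct.mul_right, Pi.mul_apply,
      mulAutArrow_apply_apply', mul_smul, inv_smul_smul, mul_assoc]

instance [Nontrivial α] [FaithfulSMul G α] :
    FaithfulSMul (PairWreath G α) ((Fin 2 ↪ α) × ℤˣ) where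
  eq_of_smul_eq_smul {w v} h := by
    have hright : w.right = v.right := eq_of_smul_eq_smul fun a : α => by
      obtain ⟨b, hb⟩ := exists_ne a
      exact congrArg (fun y => y.1 0) (h (Function.Embedding.embFinTwo hb.symm, 1))
    refine SemidirectProduct.ext (funext fun ω => ?_) hright
    have h' := congrArg Prod.snd (h (v.right⁻¹ • ω, 1))
    simpa [smul_def, hright] using h'

variable [LinearOrder α]

def orientation (ω : Fin 2 ↪ α) : ℤˣ := if ω 0 < ω 1 then 1 else -1

lemma orientation_reverse (ω : Fin 2 ↪ α) : orientation (reverse ω) = -orientation ω := by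
  have hne : ω 0 ≠ ω 1 := ω.injective.ne (by decide)
  rcases hne.lt_or_gt with h | h
  · simp [orientation, h, h.not_gt]
  · simp [orientation, h, h.not_gt]

lemma exists_mul_reverse_eq {s : (Fin 2 ↪ α) → ℤˣ} (hs : ∀ ω, s (reverse ω) = s ω) :
    ∃ f : (Fin 2 ↪ α) → ℤˣ, ∀ ω, f ω * f (reverse ω) = s ω := by
  refine ⟨fun ω => if ω 0 < ω 1 then s ω else 1, fun ω => ?_⟩
  have hne : ω 0 ≠ ω 1 := ω.injective.ne (by decide)
  rcases hne.lt_or_gt with h | h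
  · simp [h, h.not_gt]
  · simp [h, h.not_gt, hs]

variable (G α) in
def orientationCover : Subgroup (PairWreath G α) where
  carrier := {w | ∀ ω, w.left ω * w.left (reverse ω) = orientation ω * orientation (w.right⁻¹ • ω)}
  one_mem' ω := by simp [Int.units_mul_self]
  mul_mem' {w v} hw hv ω := by
    have hw := hw ω
    have hv := hv (w.right⁻¹ • ω)
    simp only [SemidirectProduct.mul_left, SemidirectProduct.mul_right, Pi.mul_apply,
      mulAutArrow_apply_apply', ← reverse_smul, mul_inv_rev, mul_smul] at hv ⊢
    rw [mul_mul_mul_comm, hw, hv, mul_assoc, ← mul_assoc (orientation (w.right⁻¹ • ω)),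
      Int.units_mul_self, one_mul]
  inv_mem' {w} hw ω := by
    have hw := hw (w.right • ω)
    simp only [SemidirectProduct.inv_left, SemidirectProduct.inv_right, inv_inv,
      mulAutArrow_apply_apply', Pi.inv_apply, ← reverse_smul, inv_smul_smul,
      Int.units_inv_eq_self] at hw ⊢
    rw [hw, mul_comm]

def proj : orientationCover G α →* G :=
  SemidirectProduct.rightHom.comp (orientationCover G α).subtype

lemma proj_apply (x : orientationCover G α) : proj x = (x : PairWreath G α).right := rfl

lemma proj_surjective : Function.Surjective (proj : orientationCover G α →* G) := by
  intro g
  obtain ⟨f, hf⟩ := exists_mul_reverse_eq (α := α)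
    (s := fun ω => orientation ω * orientation (g⁻¹ • ω)) fun ω => by
      simp only [← reverse_smul, orientation_reverse, neg_mul_neg]
  exact ⟨⟨⟨f, g⟩, hf⟩, rfl⟩

variable (G α) in
def constSign (u : ℤˣ) : orientationCover G α :=
  ⟨SemidirectProduct.inl (fun _ : Fin 2 ↪ α => u), fun ω => by simp [Int.units_mul_self]⟩

lemma constSign_smul (u : ℤˣ) (y : (Fin 2 ↪ α) × ℤˣ) :
    constSign G α u • y = (y.1, u * y.2) := by
  simp [constSign, Subgroup.smul_def, smul_def]

lemma proj_constSign (u : ℤˣ) : proj (constSign G α u) = 1 := rfl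

lemma eq_inl_of_mem_ker {x : orientationCover G α} (hx : x ∈ proj.ker) :
    (x : PairWreath G α) = SemidirectProduct.inl (x : PairWreath G α).left :=
  SemidirectProduct.ext rfl hx

lemma sq_eq_one_of_mem_ker {x : orientationCover G α} (hx : x ∈ proj.ker) : x ^ 2 = 1 := by
  have hsq : (x : PairWreath G α).left ^ 2 = 1 := funext fun ω => Int.units_sq _
  apply Subtype.ext
  rw [Subgroup.coe_pow, eq_inl_of_mem_ker hx, ← map_pow, hsq, map_one, Subgroup.coe_one]

lemma mul_comm_of_mem_ker {x y : orientationCover G α} (hx : x ∈ proj.ker) (hy : y ∈ proj.ker) :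
    x * y = y * x := by
  apply Subtype.ext
  rw [Subgroup.coe_mul, Subgroup.coe_mul, eq_inl_of_mem_ker hx, eq_inl_of_mem_ker hy, ← map_mul,
    ← map_mul, mul_comm]

lemma ker_proj_ne_bot [Nontrivial α] : (proj : orientationCover G α →* G).ker ≠ ⊥ := by
  obtain ⟨a, b, hab⟩ := exists_pair_ne α
  intro hbot
  have h : constSign G α (-1) = 1 := by
    rw [← Subgroup.mem_bot, ← hbot]
    exact proj_constSign _
  have := congrArg (· • (Function.Embedding.embFinTwo hab, (1 : ℤˣ))) h
  simp [constSign_smul] at this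

lemma sq_ne_one_of_proj_smul_eq_reverse (x : orientationCover G α) {ω : Fin 2 ↪ α}
    (hω : proj x • ω = reverse ω) : x ^ 2 ≠ 1 := by
  intro hx
  -- at `reverse ω`, `x²` is the left side of the cover condition, whose right side is `-1`
  have hback : (proj x)⁻¹ • reverse ω = ω := by rw [← hω, inv_smul_smul]
  have hsq : (x : PairWreath G α).left (reverse ω) * (x : PairWreath G α).left ω = 1 := by
    have h := congrArg (fun w : PairWreath G α => w.left (reverse ω)) (congrArg Subtype.val hx)
    simp only [pow_two, Subgroup.coe_mul, SemidirectProduct.mul_left, Pi.mul_apply,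
      mulAutArrow_apply_apply', ← proj_apply, hback] at h
    exact h
  have hcover := x.2 (reverse ω)
  rw [reverse_reverse, ← proj_apply, hback, hsq, orientation_reverse, neg_mul,
    Int.units_mul_self] at hcover
  exact absurd hcover (by decide)

lemma not_exists_isComplement'_ker_proj {g : G} (hg : g ^ 2 = 1) {ω : Fin 2 ↪ α}
    (hgω : g • ω = reverse ω) :
    ¬ ∃ K : Subgroup (orientationCover G α), proj.ker.IsComplement' K := by
  obtain ⟨x, rfl⟩ := proj_surjective (α := α) g
  exact MonoidHom.not_exists_isComplement'_ker x hg fun y hy =>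
    sq_ne_one_of_proj_smul_eq_reverse y (hy ▸ hgω)

theorem isNonsplitElementaryAbelianTwoExtension_proj {g : G} (hg : g ^ 2 = 1) {ω : Fin 2 ↪ α}
    (hgω : g • ω = reverse ω) :
    (proj : orientationCover G α →* G).IsNonsplitElementaryAbelianTwoExtension :=
  have : Nontrivial α := ω.injective.nontrivial
  ⟨proj_surjective, ker_proj_ne_bot, fun _ => sq_eq_one_of_mem_ker,
    fun _ hx _ hy => mul_comm_of_mem_ker hx hy, not_exists_isComplement'_ker_proj hg hgω⟩

instance [IsMultiplyPretransitive G α 2] :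
    IsPretransitive (orientationCover G α) ((Fin 2 ↪ α) × ℤˣ) where
  exists_smul_eq := by
    rintro ⟨ω, ε⟩ ⟨ω', ε'⟩
    obtain ⟨g, hg⟩ := exists_smul_eq G ω ω'
    obtain ⟨x, rfl⟩ := proj_surjective (α := α) g
    have hx : x • (ω, ε) = (ω', (x : PairWreath G α).left ω' * ε) := by
      rw [Subgroup.smul_def, smul_def, ← proj_apply, hg]
    refine ⟨constSign G α (ε' * ((x : PairWreath G α).left ω' * ε)⁻¹) * x, ?_⟩
    rw [mul_smul, hx, constSign_smul, inv_mul_cancel_right]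

end OrientationCover

open OrientationCover

theorem alternatingGroup.exists_sq_eq_one_smul_eq_reverse {α : Type*} [Fintype α]
    [DecidableEq α] (hα : 4 ≤ Fintype.card α) :
    ∃ g : alternatingGroup α, g ^ 2 = 1 ∧ ∃ ω : Fin 2 ↪ α, g • ω = reverse ω := by
  obtain ⟨ι⟩ : Nonempty (Fin 4 ↪ α) := Function.Embedding.nonempty_of_card_le (by simpa using hα)
  let g₀ : Perm (Fin 4) := swap 0 1 * swap 2 3
  let g := Perm.viaEmbeddingHom ι g₀
  have hsign : Perm.sign g = 1 := by
    rw [show g = g₀.viaEmbedding ι from rfl, Perm.viaEmbedding, Perm.sign_extendDomain]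
    decide
  refine ⟨⟨g, hsign⟩, Subtype.ext ?_, (Fin.castLEEmb (by norm_num)).trans ι, ?_⟩
  · rw [Subgroup.coe_pow, ← map_pow, show g₀ ^ 2 = 1 by decide, map_one, Subgroup.coe_one]
  · ext i
    fin_cases i <;>
      simp [Subgroup.smul_def, Perm.smul_def, g, Perm.viaEmbeddingHom_apply,
        Perm.viaEmbedding_apply, g₀] <;> decide

/-- **Theorem (Guralnick–Liebeck, Theorem 1.2(ii) / Section 4).**
For every `k ≥ 7` there exists a nonsplit extension `1 → M → H → A_k → 1` with `M` a
nontrivial elementary abelian 2-group, such that `H` has a faithful transitive permutation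
representation of degree at most `2k(k-1)`: i.e. for some `n ≤ 2k(k-1)`, `H` is realized
as a transitive subgroup of `S_n`. -/
theorem exists_nonsplit_extension_transitive_perm_rep_even
    (k : ℕ) (hk : 7 ≤ k) :
    ∃ n : ℕ, n ≤ 2 * (k * (k - 1)) ∧
      ∃ H : Subgroup (Equiv.Perm (Fin n)),
        (∀ a b : Fin n, ∃ h ∈ H, h a = b) ∧
        ∃ M : Subgroup H, M ≠ ⊥ ∧
          (∀ x ∈ M, x ^ 2 = 1) ∧ (∀ x ∈ M, ∀ y ∈ M, x * y = y * x) ∧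
          ∃ _ : M.Normal, Nonempty ((H ⧸ M) ≃* alternatingGroup (Fin k)) ∧
            ¬ ∃ K : Subgroup H, M.IsComplement' K := by
  have : Nontrivial (Fin k) := Fin.nontrivial_iff_two_le.mpr (by omega)
  have : IsMultiplyPretransitive (alternatingGroup (Fin k)) (Fin k) 2 :=
    have := alternatingGroup.isMultiplyPretransitive (Fin k)
    isMultiplyPretransitive_of_le (n := Nat.card (Fin k) - 2) (by simp; omega) (by simp)
  obtain ⟨g, hg, ω, hgω⟩ := alternatingGroup.exists_sq_eq_one_smul_eq_reverse (α := Fin k)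
    (by simp; omega)
  have hcard : Fintype.card ((Fin 2 ↪ Fin k) × ℤˣ) = 2 * (k * (k - 1)) := by
    simp only [Fintype.card_prod, Fintype.card_embedding_eq, Fintype.card_fin,
      Fintype.card_units_int, Nat.descFactorial, Nat.sub_zero]
    ring
  exact ⟨_, hcard.le,
    (isNonsplitElementaryAbelianTwoExtension_proj hg hgω).exists_transitive_subgroup_perm_fin⟩
end
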